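/- Let D be an open connected subset of ℝ² or S², and let U be a connected component of the complement of the closure of D. Then the set of boundary points of D that are accessible from D is dense in ∂D. -/

import Mathlib

open Metric Set

/-- The plane `ℝ²`. -/
abbrev Plane := EuclideanSpace ℝ (Fin 2)

/-- The 2-sphere, as the unit sphere in `ℝ³`. -/
abbrev Sph := Metric.sphere (0 : EuclideanSpace ℝ (Fin 3)) 1

/-- A point `x` is accessible from an open set `D` if there is a continuous injective map
`φ : [0,1] → closure D` with `φ 1 = x` and `φ([0,1)) ⊆ D`. -/
def Accessible {X : Type*} [TopologicalSpace X] (D : Set X) (x : X) : Prop :=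
  ∃ φ : ℝ → X, ContinuousOn φ (Icc 0 1) ∧ InjOn φ (Icc 0 1) ∧
    φ 1 = x ∧ φ '' Icc 0 1 ⊆ closure D ∧ φ '' Ico 0 1 ⊆ D

/-- The key lemma: in any space admitting charts to the plane, accessible boundary points
of an open set are dense in the boundary. Proved by the segment argument inside a chart:
take a point `y` of `D` near a boundary point, follow the straight segment from (the image
in the chart of) `y` towards the boundary point, and stop at the first exit from `D`. -/
theorem accessible_dense_of_charts {X : Type*} [TopologicalSpace X]
    (charts : ∀ x : X, ∃ e : OpenPartialHomeomorph X Plane, x ∈ e.source)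
    (D : Set X) (hDopen : IsOpen D) :
    frontier D ⊆ closure {x | x ∈ frontier D ∧ Accessible D x} := by
  intro x hx
  rw [_root_.mem_closure_iff]
  intro W hWopen hxW
  obtain ⟨e, hxe⟩ := charts x
  -- `x` is not in `D` (frontier of an open set), and is in `closure D`.
  have hxD : x ∉ D := fun h => (hDopen.frontier_eq ▸ hx).2 h
  have hxcl : x ∈ closure D := hx.1
  -- The image of `D ∩ e.source` in the plane.
  set D' : Set Plane := e '' (D ∩ e.source) with hD'def
  have hD'open : IsOpen D' := e.isOpen_image_of_subset_source
    (hDopen.inter e.open_source) inter_subset_right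
  set a : Plane := e x with ha
  -- `a` is in the closure of `D'` but not in `D'`.
  have hxclS : x ∈ closure (D ∩ e.source) := by
    have := e.open_source.inter_closure (t := D) ⟨hxe, hxcl⟩
    rwa [inter_comm] at this
  have hacl : a ∈ closure D' :=
    (e.continuousAt hxe).continuousWithinAt.mem_closure_image hxclS
  have haD' : a ∉ D' := by
    rintro ⟨w, ⟨hwD, hws⟩, hwe⟩
    exact hxD (e.injOn hws hxe hwe ▸ hwD)
  -- A small ball around `a` contained in the target and mapped into `W` by `e.symm`.
  have hT : IsOpen (e.target ∩ e.symm ⁻¹' W) := e.symm.isOpen_inter_preimage hWopen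
  have haT : a ∈ e.target ∩ e.symm ⁻¹' W := by
    refine ⟨e.map_source hxe, ?_⟩
    simp only [mem_preimage, e.left_inv hxe]
    rw [ha, e.left_inv hxe]; exact hxW
  obtain ⟨r, hr, hball⟩ := Metric.isOpen_iff.1 hT a haT
  -- A point of `D'` in the ball.
  obtain ⟨y, hyD', hyball⟩ := Metric.mem_closure_iff.1 hacl r hr
  rw [dist_comm] at hyball
  have hya : y ≠ a := fun h => haD' (h ▸ hyD')
  -- The segment from `y` to `a`.
  set φ : ℝ → Plane := fun t => y + t • (a - y) with hφdef
  have hφcont : Continuous φ := by continuity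
  have hφ0 : φ 0 = y := by simp [hφdef]
  have hφinj : Function.Injective φ := by
    intro s t hst
    have h1 : s • (a - y) = t • (a - y) := by
      have := hst
      simpa [hφdef] using this
    have h2 : a - y ≠ 0 := sub_ne_zero.2 (Ne.symm hya)
    by_contra hne
    exact h2 (by
      have := sub_eq_zero.2 h1
      rw [← sub_smul] at this
      exact (smul_eq_zero.1 this).resolve_left (sub_ne_zero.2 hne))
  have hφball : ∀ t ∈ Icc (0:ℝ) 1, φ t ∈ ball a r := by
    intro t ht
    have : φ t - a = (1 - t) • (y - a) := by
      simp only [hφdef]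
      module
    rw [mem_ball, dist_eq_norm, this, norm_smul]
    calc ‖(1:ℝ) - t‖ * ‖y - a‖ ≤ 1 * ‖y - a‖ := by
          apply mul_le_mul_of_nonneg_right _ (norm_nonneg _)
          rw [Real.norm_eq_abs, abs_le]
          constructor <;> linarith [ht.1, ht.2]
      _ = ‖y - a‖ := one_mul _
      _ < r := by rwa [← dist_eq_norm]
  -- First exit time from `D'`.
  set S : Set ℝ := {t ∈ Icc (0:ℝ) 1 | φ t ∉ D'} with hSdef
  have hSclosed : IsClosed S := by
    have : S = Icc (0:ℝ) 1 ∩ φ ⁻¹' D'ᶜ := rfl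
    rw [this]
    exact isClosed_Icc.inter (hD'open.isClosed_compl.preimage hφcont)
  have h1S : (1:ℝ) ∈ S := by
    refine ⟨⟨zero_le_one, le_refl 1⟩, ?_⟩
    have : φ 1 = a := by simp [hφdef]
    rw [this]; exact haD'
  have hSne : S.Nonempty := ⟨1, h1S⟩
  have hSbdd : BddBelow S := ⟨0, fun t ht => ht.1.1⟩
  set t₀ : ℝ := sInf S with ht₀def
  have ht₀S : t₀ ∈ S := hSclosed.csInf_mem hSne hSbdd
  have ht₀mem : t₀ ∈ Icc (0:ℝ) 1 := ht₀S.1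
  have h0S : (0:ℝ) ∉ S := fun h => h.2 (hφ0 ▸ hyD')
  have ht₀pos : 0 < t₀ := lt_of_le_of_ne ht₀mem.1 (fun h => h0S (h ▸ ht₀S))
  have hbefore : ∀ t ∈ Ico (0:ℝ) t₀, φ t ∈ D' := by
    intro t ht
    by_contra h
    exact absurd (csInf_le hSbdd ⟨⟨ht.1, ht.2.le.trans ht₀mem.2⟩, h⟩) (not_le.2 ht.2)
  -- The exit point.
  set z' : Plane := φ t₀ with hz'def
  have hz'cl : z' ∈ closure D' := by
    have htend : Filter.Tendsto φ (nhdsWithin t₀ (Iio t₀)) (nhds z') :=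
      (hφcont.tendsto t₀).mono_left nhdsWithin_le_nhds
    refine mem_closure_of_tendsto htend ?_
    have hmem : Ico (0:ℝ) t₀ ∈ nhdsWithin t₀ (Iio t₀) :=
      Ico_mem_nhdsLT_of_mem ⟨ht₀pos, le_refl t₀⟩
    filter_upwards [hmem] with t ht using hbefore t ht
  have hz'D' : z' ∉ D' := ht₀S.2
  have hz'T : z' ∈ e.target ∩ e.symm ⁻¹' W := hball (hφball t₀ ht₀mem)
  -- Pull back to `X`.
  set z : X := e.symm z' with hzdef
  have hzsrc : z ∈ e.source := e.map_target hz'T.1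
  have hzcl : z ∈ closure D := by
    have h1 : z ∈ closure (e.symm '' D') :=
      (e.continuousAt_symm hz'T.1).continuousWithinAt.mem_closure_image hz'cl
    refine closure_mono ?_ h1
    rintro w ⟨v, ⟨u, ⟨huD, hus⟩, rfl⟩, rfl⟩
    rwa [e.left_inv hus]
  have hzD : z ∉ D := by
    intro hzD
    have : e z ∈ D' := mem_image_of_mem e ⟨hzD, hzsrc⟩
    rw [hzdef, e.right_inv hz'T.1] at this
    exact hz'D' this
  have hzfr : z ∈ frontier D := by
    rw [hDopen.frontier_eq]
    exact ⟨hzcl, hzD⟩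
  have hzW : z ∈ W := hz'T.2
  -- The accessibility path.
  refine ⟨z, hzW, hzfr, ?_⟩
  set ψ : ℝ → X := fun s => e.symm (φ (t₀ * s)) with hψdef
  have hmaps : ∀ s ∈ Icc (0:ℝ) 1, φ (t₀ * s) ∈ ball a r := by
    intro s hs
    exact hφball _ ⟨mul_nonneg ht₀pos.le hs.1,
      (mul_le_one₀ ht₀mem.2 hs.1 hs.2)⟩
  have hmapsIcc : ∀ s ∈ Icc (0:ℝ) 1, t₀ * s ∈ Icc (0:ℝ) 1 :=
    fun s hs => ⟨mul_nonneg ht₀pos.le hs.1, mul_le_one₀ ht₀mem.2 hs.1 hs.2⟩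
  have hIcoD' : ∀ s ∈ Ico (0:ℝ) 1, φ (t₀ * s) ∈ D' := by
    intro s hs
    refine hbefore _ ⟨mul_nonneg ht₀pos.le hs.1, ?_⟩
    calc t₀ * s < t₀ * 1 := by
          exact mul_lt_mul_of_pos_left hs.2 ht₀pos
      _ = t₀ := mul_one _
  refine ⟨ψ, ?_, ?_, ?_, ?_, ?_⟩
  · -- continuity
    have hc1 : Continuous fun s : ℝ => φ (t₀ * s) :=
      hφcont.comp (continuous_const.mul continuous_id)
    apply e.continuousOn_symm.comp hc1.continuousOn
    intro s hs
    exact (hball (hmaps s hs)).1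
  · -- injectivity
    intro s hs t ht hst
    have h1 : φ (t₀ * s) ∈ e.target := (hball (hmaps s hs)).1
    have h2 : φ (t₀ * t) ∈ e.target := (hball (hmaps t ht)).1
    have := e.symm.injOn h1 h2 hst
    have := hφinj this
    exact mul_left_cancel₀ ht₀pos.ne' this
  · simp [hψdef, hzdef]; rfl
  · -- image of Icc in closure D
    rintro w ⟨s, hs, rfl⟩
    rcases eq_or_lt_of_le hs.2 with h1 | h1
    · have : ψ s = z := by rw [h1]; simp [hψdef, hzdef]; rfl
      rw [this]; exact hzcl
    · refine subset_closure ?_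
      obtain ⟨u, ⟨huD, hus⟩, hue⟩ := hIcoD' s ⟨hs.1, h1⟩
      show e.symm (φ (t₀ * s)) ∈ D
      rw [← hue, e.left_inv hus]
      exact huD
  · -- image of Ico in D
    rintro w ⟨s, hs, rfl⟩
    obtain ⟨u, ⟨huD, hus⟩, hue⟩ := hIcoD' s hs
    show e.symm (φ (t₀ * s)) ∈ D
    rw [← hue, e.left_inv hus]
    exact huD

instance : Fact (Module.finrank ℝ (EuclideanSpace ℝ (Fin 3)) = 2 + 1) :=
  ⟨by simp [finrank_euclideanSpace_fin]⟩

theorem sph_charts : ∀ x : Sph, ∃ e : OpenPartialHomeomorph Sph Plane, x ∈ e.source := by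
  intro x
  refine ⟨stereographic' 2 (-x), ?_⟩
  rw [stereographic'_source]
  simp only [mem_compl_iff, mem_singleton_iff]
  intro h
  have hx : (x : EuclideanSpace ℝ (Fin 3)) = -(x : EuclideanSpace ℝ (Fin 3)) := by
    exact_mod_cast congrArg (Subtype.val) h
  have h2 : (x : EuclideanSpace ℝ (Fin 3)) + x = 0 := eq_neg_iff_add_eq_zero.mp hx
  have : (x : EuclideanSpace ℝ (Fin 3)) = 0 := by
    have h3 : (2:ℝ) • (x : EuclideanSpace ℝ (Fin 3)) = 0 := by rw [two_smul]; exact h2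
    simpa using (smul_eq_zero.mp h3).resolve_left (by norm_num)
  have hxn : ‖(x : EuclideanSpace ℝ (Fin 3))‖ = 1 := norm_eq_of_mem_sphere x
  rw [this] at hxn
  simp at hxn

theorem plane_charts : ∀ x : Plane, ∃ e : OpenPartialHomeomorph Plane Plane, x ∈ e.source :=
  fun _ => ⟨OpenPartialHomeomorph.refl Plane, mem_univ _⟩

theorem stmt_14 {X : Type*} [TopologicalSpace X]
    (hX : Nonempty (X ≃ₜ Plane) ∨ Nonempty (X ≃ₜ Sph))
    (D : Set X) (hDopen : IsOpen D) (hDconn : IsConnected D)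
    (U : Set X)
    (hU : ∃ x ∈ ((closure D)ᶜ : Set X), U = connectedComponentIn ((closure D)ᶜ) x) :
    frontier D ⊆ closure {x | x ∈ frontier D ∧ Accessible D x} := by
  apply accessible_dense_of_charts _ D hDopen
  rcases hX with ⟨⟨h⟩⟩ | ⟨⟨h⟩⟩
  · intro x
    obtain ⟨e, he⟩ := plane_charts (h x)
    exact ⟨h.toOpenPartialHomeomorph.trans e, by
      simp [Homeomorph.toOpenPartialHomeomorph, OpenPartialHomeomorph.trans_source, he]⟩
  · intro x
    obtain ⟨e, he⟩ := sph_charts (h x)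
    exact ⟨h.toOpenPartialHomeomorph.trans e, by
      simp [Homeomorph.toOpenPartialHomeomorph, OpenPartialHomeomorph.trans_source, he]⟩
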